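/- Let G be the group with presentation ⟨x₁, x₂, x₃, x₄, μ | μ x₁ μ⁻¹ = x₁ x₂⁻¹, μ x₂⁻¹ x₁ μ⁻¹ = x₃ x₂⁻¹, μ x₂⁻¹ x₃ μ⁻¹ = x₃ x₄⁻¹, μ x₄⁻¹ x₃ μ⁻¹ = x₄⁻¹⟩ (the Lin presentation of the 5₁ torus knot group) and let ζ₅ = exp(2π√−1/5). Then for each k ∈ {1, 2} there exists a group homomorphism ρ_k: G → SL(2,ℂ) with ρ_k(x_i) = [[ζ₅^{ki},0],[0,ζ₅^{−ki}]] for i = 1, 2, 3, 4 and ρ_k(μ) = J; each ρ_k is irreducible, and ρ₁ and ρ₂ are not conjugate in SL(2,ℂ). -/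

import Mathlib

/-!
The generator `xᵢ` goes to `diag(uⁱ, u⁻ⁱ)` and `μ` to `J`. Since `J` conjugates `diag(a, a⁻¹)` to
`diag(a⁻¹, a)`, every relator maps to a diagonal matrix, which is trivial once `u⁵ = 1`.
If `u² ≠ 1`, a line invariant under `diag(u, u⁻¹)` is a coordinate axis, and `J` swaps the two
axes, so the representation is irreducible. Conjugate representations have equal traces at `x₁`,
but `ζ + ζ⁻¹ ≠ ζ² + ζ⁻²`: multiplied by `ζ²`, the difference is `-(ζ - 1)(ζ³ - 1)`.
-/

open Matrix

abbrev SL2C := Matrix.SpecialLinearGroup (Fin 2) ℂ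

/-- The relators of the Lin presentation
`⟨x₁, x₂, x₃, x₄, μ | μ x₁ μ⁻¹ = x₁ x₂⁻¹, μ x₂⁻¹ x₁ μ⁻¹ = x₃ x₂⁻¹,
  μ x₂⁻¹ x₃ μ⁻¹ = x₃ x₄⁻¹, μ x₄⁻¹ x₃ μ⁻¹ = x₄⁻¹⟩` of the `5₁` (torus `(2,5)`) knot
group, with `x₁, x₂, x₃, x₄, μ` the generators `0, 1, 2, 3, 4`. -/
def fiveOneRels : Set (FreeGroup (Fin 5)) :=
  { (FreeGroup.of 4) * (FreeGroup.of 0) * (FreeGroup.of 4)⁻¹ *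
      ((FreeGroup.of 0) * (FreeGroup.of 1)⁻¹)⁻¹,
    (FreeGroup.of 4) * (FreeGroup.of 1)⁻¹ * (FreeGroup.of 0) * (FreeGroup.of 4)⁻¹ *
      ((FreeGroup.of 2) * (FreeGroup.of 1)⁻¹)⁻¹,
    (FreeGroup.of 4) * (FreeGroup.of 1)⁻¹ * (FreeGroup.of 2) * (FreeGroup.of 4)⁻¹ *
      ((FreeGroup.of 2) * (FreeGroup.of 3)⁻¹)⁻¹,
    (FreeGroup.of 4) * (FreeGroup.of 3)⁻¹ * (FreeGroup.of 2) * (FreeGroup.of 4)⁻¹ *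
      (((FreeGroup.of 3))⁻¹)⁻¹ }

/-- The `5₁` knot group via its Lin presentation. -/
def FiveOneGroup : Type := PresentedGroup fiveOneRels

instance : Group FiveOneGroup := by unfold FiveOneGroup; infer_instance

open scoped MatrixGroups

lemma Matrix.SpecialLinearGroup.trace_conj {n R : Type*} [Fintype n] [DecidableEq n] [CommRing R]
    (P M : Matrix.SpecialLinearGroup n R) :
    ((P * M * P⁻¹ : Matrix.SpecialLinearGroup n R) : Matrix n n R).trace =
      (M : Matrix n n R).trace := by
  rw [coe_mul, coe_mul, trace_mul_cycle, ← coe_mul, inv_mul_cancel, coe_one, Matrix.one_mul]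

section SL2

variable {K : Type*} [Field K]

def diagSL : Kˣ →* SL(2, K) where
  toFun u := ⟨!![(u : K), 0; 0, (u : K)⁻¹], by simp⟩
  map_one' := Subtype.coe_injective <| by simp [one_fin_two]
  map_mul' u v := Subtype.ext <| by
    change _ = (_ : Matrix (Fin 2) (Fin 2) K) * _
    simp [mul_comm]

def jSL : SL(2, K) := ⟨!![0, 1; -1, 0], by simp⟩

@[simp] lemma coe_diagSL (u : Kˣ) :
    (diagSL u : Matrix (Fin 2) (Fin 2) K) = !![(u : K), 0; 0, (u : K)⁻¹] := rfl

@[simp] lemma coe_jSL : ((jSL : SL(2, K)) : Matrix (Fin 2) (Fin 2) K) = !![0, 1; -1, 0] := rfl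

lemma jSL_mul_diagSL (u : Kˣ) : jSL * diagSL u = diagSL u⁻¹ * jSL :=
  Subtype.coe_injective <| by simp

lemma trace_diagSL (u : Kˣ) : (diagSL u : Matrix (Fin 2) (Fin 2) K).trace = u + (u : K)⁻¹ := by
  simp [trace_fin_two]

lemma jSL_mul_diagSL_mul (u : Kˣ) (M : SL(2, K)) :
    jSL * (diagSL u * M) = diagSL u⁻¹ * (jSL * M) := by
  rw [← mul_assoc, jSL_mul_diagSL, mul_assoc]

lemma Submodule.exists_eigenvector_of_finrank_eq_one {n : Type*} [Fintype n]
    {W : Submodule K (n → K)} (hW : Module.finrank K W = 1) :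
    ∃ v ∈ W, v ≠ 0 ∧ ∀ M : Matrix n n K, (∀ w ∈ W, M *ᵥ w ∈ W) → ∃ c : K, M *ᵥ v = c • v := by
  obtain ⟨⟨v, hvW⟩, hv0, hspan⟩ := finrank_eq_one_iff'.1 hW
  refine ⟨v, hvW, fun h => hv0 (Subtype.ext h), fun M hM => ?_⟩
  obtain ⟨c, hc⟩ := hspan ⟨M *ᵥ v, hM v hvW⟩
  exact ⟨c, (congrArg Subtype.val hc).symm⟩

lemma sq_eq_one_of_common_eigenvector {u : Kˣ} {v : Fin 2 → K} (hv : v ≠ 0) {c d : K}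
    (hD : (diagSL u : Matrix (Fin 2) (Fin 2) K) *ᵥ v = c • v)
    (hJ : ((jSL : SL(2, K)) : Matrix (Fin 2) (Fin 2) K) *ᵥ v = d • v) : u ^ 2 = 1 := by
  have hD0 : u * v 0 = c * v 0 := by simpa [vecHead, vecTail] using congrFun hD 0
  have hD1 : (u : K)⁻¹ * v 1 = c * v 1 := by simpa [vecHead, vecTail] using congrFun hD 1
  have hJ0 : v 1 = d * v 0 := by simpa [vecHead, vecTail] using congrFun hJ 0
  have hJ1 : -v 0 = d * v 1 := by simpa [vecHead, vecTail] using congrFun hJ 1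
  have hv0 : v 0 ≠ 0 := fun h => hv <| funext <| Fin.forall_fin_two.2 ⟨h, by simp [hJ0, h]⟩
  have hv1 : v 1 ≠ 0 := fun h => hv0 <| by simpa [h] using hJ1
  have hu : u = u⁻¹ := Units.ext <| by
    rw [Units.val_inv_eq_inv_val]
    exact (mul_right_cancel₀ hv0 hD0).trans (mul_right_cancel₀ hv1 hD1).symm
  calc u ^ 2 = u * u⁻¹ := by rw [sq, ← hu]
    _ = 1 := mul_inv_cancel u

lemma add_inv_ne_sq_add_inv {ζ : K} (h0 : ζ ≠ 0) (h1 : ζ ≠ 1) (h3 : ζ ^ 3 ≠ 1) :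
    ζ + ζ⁻¹ ≠ ζ ^ 2 + (ζ ^ 2)⁻¹ := by
  intro h
  have : (ζ - 1) * (ζ ^ 3 - 1) = 0 := by
    field_simp at h
    linear_combination -h
  rcases mul_eq_zero.1 this with h | h
  · exact h1 (sub_eq_zero.1 h)
  · exact h3 (sub_eq_zero.1 h)

end SL2

namespace FiveOneGroup

variable {K : Type*} [Field K]

noncomputable def gens (u : Kˣ) : Fin 5 → SL(2, K) :=
  ![diagSL u, diagSL (u ^ 2), diagSL (u ^ 3), diagSL (u ^ 4), jSL]

lemma lift_gens_eq_one {u : Kˣ} (hu : u ^ 5 = 1) :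
    ∀ r ∈ fiveOneRels, FreeGroup.lift (gens u) r = 1 := by
  simp only [fiveOneRels, Set.mem_insert_iff, Set.mem_singleton_iff, forall_eq_or_imp, forall_eq,
    map_mul, map_inv, FreeGroup.lift_apply_of, gens]
  simp only [cons_val, _root_.mul_inv_rev, inv_inv, ← map_inv, mul_assoc,
    jSL_mul_diagSL_mul, mul_inv_cancel_left, ← map_mul]
  refine ⟨?_, ?_, ?_, ?_⟩ <;> convert map_one diagSL using 2 <;> group
  -- the words of the first three relators are trivial in any group
  exact hu

noncomputable def linRep (u : Kˣ) (hu : u ^ 5 = 1) : FiveOneGroup →* SL(2, K) :=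
  PresentedGroup.toGroup (lift_gens_eq_one hu)

section

variable {u : Kˣ} (hu : u ^ 5 = 1)

lemma linRep_of (i : Fin 5) : linRep u hu (PresentedGroup.of i) = gens u i :=
  PresentedGroup.toGroup.of _

lemma linRep_of_castSucc (i : Fin 4) :
    linRep u hu (PresentedGroup.of i.castSucc) = diagSL (u ^ ((i : ℕ) + 1)) := by
  rw [linRep_of]
  fin_cases i <;> simp [gens]

lemma linRep_of_four : linRep u hu (PresentedGroup.of 4) = jSL := linRep_of hu 4

lemma trace_linRep_of_zero :
    (linRep u hu (PresentedGroup.of 0) : Matrix (Fin 2) (Fin 2) K).trace = u + (u : K)⁻¹ := by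
  rw [linRep_of, gens, cons_val_zero, trace_diagSL]

lemma linRep_irreducible (hu2 : u ^ 2 ≠ 1) (W : Submodule K (Fin 2 → K))
    (hW : Module.finrank K W = 1) :
    ¬ ∀ g, ∀ w ∈ W, (linRep u hu g : Matrix (Fin 2) (Fin 2) K) *ᵥ w ∈ W := by
  intro hW_inv
  obtain ⟨v, -, hv0, hv⟩ := Submodule.exists_eigenvector_of_finrank_eq_one hW
  obtain ⟨c, hc⟩ := hv _ (hW_inv (PresentedGroup.of 0))
  obtain ⟨d, hd⟩ := hv _ (hW_inv (PresentedGroup.of 4))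
  rw [linRep_of] at hc hd
  exact hu2 (sq_eq_one_of_common_eigenvector hv0 hc hd)

end

lemma val_add_inv_eq_of_conj {u v : Kˣ} (hu : u ^ 5 = 1) (hv : v ^ 5 = 1)
    (h : ∃ P : SL(2, K), ∀ g, linRep v hv g = P * linRep u hu g * P⁻¹) :
    (u : K) + (u : K)⁻¹ = v + (v : K)⁻¹ := by
  obtain ⟨P, hP⟩ := h
  have htr := congrArg (fun M : SL(2, K) => (M : Matrix (Fin 2) (Fin 2) K).trace)
    (hP (PresentedGroup.of 0))
  rwa [Matrix.SpecialLinearGroup.trace_conj, trace_linRep_of_zero, trace_linRep_of_zero,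
    eq_comm] at htr

end FiveOneGroup

/-- with `ζ₅ = exp(2π√−1/5)`, for each `k ∈ {1,2}` there is a
homomorphism `ρₖ` from the Lin-presented `5₁` knot group to `SL(2,ℂ)` with
`ρₖ(xᵢ) = diag(ζ₅^{ki}, ζ₅^{−ki})` for `i = 1,…,4` and `ρₖ(μ) = [[0,1],[-1,0]]`;
each `ρₖ` is irreducible, and `ρ₁, ρ₂` are not conjugate in `SL(2,ℂ)`. -/
theorem stmt14 (ζ : ℂ) (hζ : ζ = Complex.exp (2 * Real.pi * Complex.I / 5)) :
    ∃ ρ₁ ρ₂ : FiveOneGroup →* SL2C,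
      (∀ k : Fin 2, ∀ ρ : FiveOneGroup →* SL2C, ρ = [ρ₁, ρ₂].get k →
        (∀ i : Fin 4,
          (ρ (PresentedGroup.of i.castSucc) : Matrix (Fin 2) (Fin 2) ℂ) =
            !![ζ ^ (((k : ℕ) + 1) * ((i : ℕ) + 1)), 0;
               0, (ζ ^ (((k : ℕ) + 1) * ((i : ℕ) + 1)))⁻¹]) ∧
        ((ρ (PresentedGroup.of (4 : Fin 5)) : Matrix (Fin 2) (Fin 2) ℂ) =
          !![0, 1; -1, 0]) ∧
        (∀ W : Submodule ℂ (Fin 2 → ℂ), Module.finrank ℂ W = 1 →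
          ¬ ∀ g : FiveOneGroup, ∀ w ∈ W,
              (ρ g : Matrix (Fin 2) (Fin 2) ℂ).mulVec w ∈ W)) ∧
      ¬ ∃ P : SL2C, ∀ g : FiveOneGroup, ρ₂ g = P * ρ₁ g * P⁻¹ := by
  have hζ5 : IsPrimitiveRoot ζ 5 := hζ ▸ Complex.isPrimitiveRoot_exp 5 (by norm_num)
  set u := Units.mk0 ζ (hζ5.ne_zero (by norm_num))
  have hu : IsPrimitiveRoot u 5 := IsPrimitiveRoot.coe_units_iff.1 hζ5
  have hu5 : u ^ 5 = 1 := hu.pow_eq_one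
  have hu25 : (u ^ 2) ^ 5 = 1 := by rw [← pow_mul, mul_comm, pow_mul, hu5, one_pow]
  refine ⟨FiveOneGroup.linRep u hu5, FiveOneGroup.linRep (u ^ 2) hu25, fun k ρ hρ => ?_, ?_⟩
  · fin_cases k <;> simp only [List.get] at hρ <;> subst hρ <;>
      refine ⟨fun i => ?_, congrArg _ (FiveOneGroup.linRep_of_four _),
        FiveOneGroup.linRep_irreducible _ ?_⟩
    · rw [FiveOneGroup.linRep_of_castSucc, coe_diagSL]
      simp [u]
    · exact hu.pow_ne_one_of_pos_of_lt two_ne_zero (by norm_num)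
    · rw [FiveOneGroup.linRep_of_castSucc, coe_diagSL]
      simp [u, ← pow_mul]
    · rw [← pow_mul]
      exact hu.pow_ne_one_of_pos_of_lt four_ne_zero (by norm_num)
  · intro hconj
    have h := FiveOneGroup.val_add_inv_eq_of_conj hu5 hu25 hconj
    refine add_inv_ne_sq_add_inv (hζ5.ne_zero (by norm_num)) (hζ5.ne_one (by norm_num))
      (hζ5.pow_ne_one_of_pos_of_lt three_ne_zero (by norm_num)) ?_
    simpa [u] using h
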